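/- Let d, r ≥ 1 and let Γ be a ℂ-linear subspace of R_r having 0 as its only common zero. Then R is generated as a module over the ℂ-subalgebra Algebra.adjoin ℂ Γ of R by the polynomials of degree at most (r−1)·d; in particular, R is a finitely generated module over Algebra.adjoin ℂ Γ. -/

import Mathlib

/-!
Because the forms in `Γ` have only the origin as common zero, the Nullstellensatz shows that the
only prime containing `Γ` is the irrelevant ideal `𝔪`. Starting from the regular sequence
`x₁, …, x_d` in `𝔪` and trading its entries one at a time for elements of `Γ` (prime avoidance
over the infinite field `ℂ`, plus the classical exchange argument for depth) one gets a regular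
sequence `g₁, …, g_d` of forms of degree `r` in `Γ`. Then `R ⧸ (g₁, …, g_d)` has Hilbert series
`((1 - t ^ r) / (1 - t)) ^ d`, a polynomial of degree `(r - 1) d`, so `R_n ⊆ (g) ⊆ Γ R` for
`n > (r - 1) d`, and induction on the degree shows that the polynomials of degree at most
`(r - 1) d` generate `R` over `ℂ[Γ]`.
-/

open MvPolynomial RingTheory.Sequence Pointwise Module

section RegularSequence

variable {R : Type*} [CommRing R]

theorem mem_sup_span_singleton_iff {K : Ideal R} {a x : R} :
    x ∈ K ⊔ Ideal.span {a} ↔ ∃ c, x - c * a ∈ K := by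
  rw [sup_comm, Ideal.mem_span_singleton_sup]
  refine ⟨fun ⟨c, b, hb, hx⟩ ↦ ⟨c, by rwa [← hx, add_sub_cancel_left]⟩, fun ⟨c, hc⟩ ↦ ?_⟩
  exact ⟨c, _, hc, add_sub_cancel _ _⟩

theorem isSMulRegular_quotient_iff_mul_mem {K : Ideal R} {a : R} :
    IsSMulRegular (R ⧸ K) a ↔ ∀ x, a * x ∈ K → x ∈ K :=
  isSMulRegular_quotient_iff_mem_of_smul_mem K a

noncomputable def quotSMulTopQuotientEquiv (K : Ideal R) (a : R) :
    QuotSMulTop a (R ⧸ K) ≃ₗ[R] R ⧸ (K ⊔ Ideal.span {a}) :=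
  (Submodule.quotEquivOfEq _ _ (by
    conv_lhs => rw [← K.range_mkQ, ← Submodule.map_top, ← Submodule.map_pointwise_smul]
    rw [← Submodule.ideal_span_singleton_smul, Ideal.smul_eq_mul, Ideal.mul_top])).trans
    (Submodule.quotientQuotientEquivQuotientSup K (Ideal.span {a}))

theorem isWeaklyRegular_quotient_cons_iff (K : Ideal R) (a : R) (l : List R) :
    IsWeaklyRegular (R ⧸ K) (a :: l) ↔
      IsSMulRegular (R ⧸ K) a ∧ IsWeaklyRegular (R ⧸ (K ⊔ Ideal.span {a})) l := by
  rw [isWeaklyRegular_cons_iff, (quotSMulTopQuotientEquiv K a).isWeaklyRegular_congr]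

theorem IsSMulRegular.quotient_sup_span_swap {K : Ideal R} {a b : R}
    (ha : IsSMulRegular (R ⧸ K) a) (hb : IsSMulRegular (R ⧸ (K ⊔ Ideal.span {a})) b) :
    IsSMulRegular (R ⧸ (K ⊔ Ideal.span {b})) a := by
  rw [isSMulRegular_quotient_iff_mul_mem] at *
  intro u hu
  obtain ⟨c, hc⟩ := mem_sup_span_singleton_iff.mp hu
  have hbc : b * c - u * a ∈ K := by
    rw [show b * c - u * a = -(a * u - c * b) by ring]
    exact K.neg_mem hc
  obtain ⟨e, he⟩ := mem_sup_span_singleton_iff.mp (hb c (mem_sup_span_singleton_iff.mpr ⟨u, hbc⟩))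
  have key : a * (u - e * b) ∈ K := by
    have : a * (u - e * b) = (a * u - c * b) + b * (c - e * a) := by ring
    rw [this]
    exact K.add_mem hc (K.mul_mem_left b he)
  exact mem_sup_span_singleton_iff.mpr ⟨e, ha _ key⟩

-- Elementwise form of: `R ⧸ (K + (g))` has positive depth when `R ⧸ K` has depth at least two.
theorem mem_sup_span_of_mul_mem_of_mul_mem {K : Ideal R} {g h₁ h₂ y : R}
    (hg : IsSMulRegular (R ⧸ K) g) (hh₁ : IsSMulRegular (R ⧸ K) h₁)
    (hh₂ : IsSMulRegular (R ⧸ (K ⊔ Ideal.span {h₁})) h₂)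
    (hy₁ : h₁ * y ∈ K ⊔ Ideal.span {g}) (hy₂ : h₂ * y ∈ K ⊔ Ideal.span {g}) :
    y ∈ K ⊔ Ideal.span {g} := by
  rw [isSMulRegular_quotient_iff_mul_mem] at hg hh₁ hh₂
  obtain ⟨m₁, hm₁⟩ := mem_sup_span_singleton_iff.mp hy₁
  obtain ⟨m₂, hm₂⟩ := mem_sup_span_singleton_iff.mp hy₂
  have hsyz : h₂ * m₁ - m₂ * h₁ ∈ K := hg _ <| by
    have : g * (h₂ * m₁ - m₂ * h₁) = h₁ * (h₂ * y - m₂ * g) - h₂ * (h₁ * y - m₁ * g) := by ring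
    rw [this]
    exact K.sub_mem (K.mul_mem_left _ hm₂) (K.mul_mem_left _ hm₁)
  obtain ⟨u, hu⟩ :=
    mem_sup_span_singleton_iff.mp (hh₂ m₁ (mem_sup_span_singleton_iff.mpr ⟨m₂, hsyz⟩))
  refine mem_sup_span_singleton_iff.mpr ⟨u, hh₁ _ ?_⟩
  have : h₁ * (y - u * g) = (h₁ * y - m₁ * g) + g * (m₁ - u * h₁) := by ring
  rw [this]
  exact K.add_mem hm₁ (K.mul_mem_left _ hu)

variable (R) in
def HasWeaklyRegularSeqIn (S : Set R) (K : Ideal R) (s : ℕ) : Prop :=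
  ∃ l : List R, l.length = s ∧ (∀ x ∈ l, x ∈ S) ∧ IsWeaklyRegular (R ⧸ K) l

theorem hasWeaklyRegularSeqIn_zero (S : Set R) (K : Ideal R) : HasWeaklyRegularSeqIn R S K 0 :=
  ⟨[], rfl, by simp, IsWeaklyRegular.nil R _⟩

theorem hasWeaklyRegularSeqIn_succ_iff {S : Set R} {K : Ideal R} {s : ℕ} :
    HasWeaklyRegularSeqIn R S K (s + 1) ↔
      ∃ a ∈ S, IsSMulRegular (R ⧸ K) a ∧ HasWeaklyRegularSeqIn R S (K ⊔ Ideal.span {a}) s := by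
  constructor
  · rintro ⟨_ | ⟨a, l⟩, hlen, hS, hreg⟩
    · simp at hlen
    · rw [isWeaklyRegular_quotient_cons_iff] at hreg
      exact ⟨a, hS a (by simp), hreg.1, l, by simpa using hlen,
        fun x hx ↦ hS x (List.mem_cons_of_mem a hx), hreg.2⟩
  · rintro ⟨a, ha, hreg, l, hlen, hS, hl⟩
    refine ⟨a :: l, by simp [hlen], ?_, (isWeaklyRegular_quotient_cons_iff K a l).mpr ⟨hreg, hl⟩⟩
    simpa [ha] using hS

variable [IsNoetherianRing R]

theorem isSMulRegular_iff_forall_notMem_associatedPrimes {M : Type*} [AddCommGroup M]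
    [Module R M] {a : R} : IsSMulRegular M a ↔ ∀ p ∈ associatedPrimes R M, a ∉ p := by
  have := congrArg (a ∈ ·) (biUnion_associatedPrimes_eq_compl_regular R M)
  simp only [Set.mem_iUnion₂, SetLike.mem_coe, eq_iff_iff] at this
  refine ⟨fun hreg p hp hap ↦ this.mp ⟨p, hp, hap⟩ hreg, fun h ↦ ?_⟩
  by_contra hreg
  obtain ⟨p, hp, hap⟩ := this.mpr hreg
  exact h p hp hap

theorem notMem_associatedPrimes_quotient_sup_span {K p : Ideal R} {g h₁ h₂ : R}
    (hg : IsSMulRegular (R ⧸ K) g) (hh₁ : IsSMulRegular (R ⧸ K) h₁)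
    (hh₂ : IsSMulRegular (R ⧸ (K ⊔ Ideal.span {h₁})) h₂) (h₁p : h₁ ∈ p) (h₂p : h₂ ∈ p) :
    p ∉ associatedPrimes R (R ⧸ (K ⊔ Ideal.span {g})) := fun hp ↦ by
  obtain ⟨hprime, y, rfl⟩ := isAssociatedPrime_iff.mp hp
  obtain ⟨y, rfl⟩ := Submodule.Quotient.mk_surjective _ y
  have hkill : ∀ b ∈ Submodule.colon (⊥ : Submodule R (R ⧸ (K ⊔ Ideal.span {g})))
      {Submodule.Quotient.mk y}, b * y ∈ K ⊔ Ideal.span {g} := fun b hb ↦ by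
    rwa [Submodule.mem_colon_singleton, Submodule.mem_bot, ← Submodule.Quotient.mk_smul,
      Submodule.Quotient.mk_eq_zero] at hb
  have hy : (Submodule.Quotient.mk y : R ⧸ (K ⊔ Ideal.span {g})) = 0 :=
    (Submodule.Quotient.mk_eq_zero _).mpr <|
      mem_sup_span_of_mul_mem_of_mul_mem hg hh₁ hh₂ (hkill _ h₁p) (hkill _ h₂p)
  apply hprime.ne_top
  rw [hy, Submodule.colon_singleton_zero]

theorem exists_mem_forall_isSMulRegular_quotient {𝔪 : Ideal R} [𝔪.IsMaximal]
    (Ks : Finset (Ideal R)) (hKs : ∀ K ∈ Ks, 𝔪 ∉ associatedPrimes R (R ⧸ K)) :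
    ∃ a ∈ 𝔪, ∀ K ∈ Ks, IsSMulRegular (R ⧸ K) a := by
  set S := ⋃ K ∈ Ks, associatedPrimes R (R ⧸ K)
  have hS : S.Finite := Ks.finite_toSet.biUnion fun K _ ↦ associatedPrimes.finite R (R ⧸ K)
  have hprime : ∀ p ∈ S, p ≠ 𝔪 → p ≠ 𝔪 → p.IsPrime := fun p hp _ _ ↦ by
    obtain ⟨K, -, hp⟩ := Set.mem_iUnion₂.mp hp
    exact hp.isPrime
  have hnot : ¬ (𝔪 : Set R) ⊆ ⋃ p ∈ S, (p : Set R) := by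
    rw [Ideal.subset_iUnion_iff_mem_of_isMaximal_of_finite hS 𝔪 𝔪 hprime
      (Ideal.IsMaximal.ne_top ‹_›) (Ideal.IsMaximal.ne_top ‹_›)]
    intro h𝔪
    obtain ⟨K, hK, h⟩ := Set.mem_iUnion₂.mp h𝔪
    exact hKs K hK h
  obtain ⟨a, ha𝔪, ha⟩ := Set.not_subset.mp hnot
  exact ⟨a, ha𝔪, fun K hK ↦ isSMulRegular_iff_forall_notMem_associatedPrimes.mpr fun p hp hap ↦
    ha (Set.mem_biUnion (Set.mem_biUnion hK hp) hap)⟩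

-- Choose `k ∈ 𝔪` regular on `R ⧸ (K + (h₁))` and on `R ⧸ (K + (g))`; then `k` can be put in front
-- of both `h₁, …` (modulo `K`) and `g` (modulo `K + (k)`), and induction applies twice.
theorem HasWeaklyRegularSeqIn.sup_span_of_isSMulRegular {𝔪 : Ideal R} [𝔪.IsMaximal] (s : ℕ) :
    ∀ {K : Ideal R} {g : R}, IsSMulRegular (R ⧸ K) g → HasWeaklyRegularSeqIn R 𝔪 K (s + 1) →
      HasWeaklyRegularSeqIn R 𝔪 (K ⊔ Ideal.span {g}) s := by
  induction s with
  | zero => exact fun _ _ ↦ hasWeaklyRegularSeqIn_zero _ _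
  | succ s ih =>
    intro K g hg hseq
    obtain ⟨h₁, h₁𝔪, hh₁, hseq₁⟩ := hasWeaklyRegularSeqIn_succ_iff.mp hseq
    obtain ⟨h₂, h₂𝔪, hh₂, -⟩ := hasWeaklyRegularSeqIn_succ_iff.mp hseq₁
    obtain ⟨k, hk𝔪, hk⟩ := exists_mem_forall_isSMulRegular_quotient (𝔪 := 𝔪)
      {K ⊔ Ideal.span {h₁}, K ⊔ Ideal.span {g}} (by
        simp only [Finset.mem_insert, Finset.mem_singleton, forall_eq_or_imp, forall_eq]
        exact ⟨fun h𝔪 ↦ isSMulRegular_iff_forall_notMem_associatedPrimes.mp hh₂ _ h𝔪 h₂𝔪,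
          notMem_associatedPrimes_quotient_sup_span hg hh₁ hh₂ h₁𝔪 h₂𝔪⟩)
    simp only [Finset.mem_insert, Finset.mem_singleton, forall_eq_or_imp, forall_eq] at hk
    obtain ⟨hkh₁, hkg⟩ := hk
    have hseqk : HasWeaklyRegularSeqIn R 𝔪 (K ⊔ Ideal.span {k}) (s + 1) :=
      hasWeaklyRegularSeqIn_succ_iff.mpr ⟨h₁, h₁𝔪, hh₁.quotient_sup_span_swap hkh₁, by
        rw [sup_right_comm]; exact ih hkh₁ hseq₁⟩
    refine hasWeaklyRegularSeqIn_succ_iff.mpr ⟨k, hk𝔪, hkg, ?_⟩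
    rw [sup_right_comm]
    exact ih (hg.quotient_sup_span_swap hkg) hseqk

theorem exists_mem_isSMulRegular_quotient_of_forall_not_subset {k : Type*} [Field k] [Infinite k]
    [Algebra k R] (Γ : Submodule k R) {K : Ideal R}
    (hΓ : ∀ p ∈ associatedPrimes R (R ⧸ K), ¬ (Γ : Set R) ⊆ p) :
    ∃ g ∈ Γ, IsSMulRegular (R ⧸ K) g := by
  have := (associatedPrimes.finite R (R ⧸ K)).to_subtype
  obtain ⟨γ, hγ⟩ : ∃ γ : Γ, ∀ p : associatedPrimes R (R ⧸ K),
      γ ∉ (p.1.restrictScalars k).comap Γ.subtype := by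
    by_contra! hcover
    obtain ⟨p, hp⟩ := Subspace.exists_eq_top_of_iUnion_eq_univ (Set.eq_univ_of_forall fun γ ↦
      Set.mem_iUnion.mpr (hcover γ))
    exact hΓ p.1 p.2 fun γ hγ ↦ by simpa using hp.ge (Submodule.mem_top (x := ⟨γ, hγ⟩))
  exact ⟨γ, γ.2, isSMulRegular_iff_forall_notMem_associatedPrimes.mpr fun p hp ↦ hγ ⟨p, hp⟩⟩

theorem HasWeaklyRegularSeqIn.of_maximalIdeal {k : Type*} [Field k] [Infinite k] [Algebra k R]
    (Γ : Submodule k R) {𝔪 : Ideal R} [𝔪.IsMaximal]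
    (hΓ : ∀ p : Ideal R, p.IsPrime → (Γ : Set R) ⊆ p → p = 𝔪) (s : ℕ) :
    ∀ {K : Ideal R}, HasWeaklyRegularSeqIn R 𝔪 K s → HasWeaklyRegularSeqIn R Γ K s := by
  induction s with
  | zero => exact fun _ ↦ hasWeaklyRegularSeqIn_zero _ _
  | succ s ih =>
    intro K hseq
    obtain ⟨b, hb𝔪, hb, -⟩ := hasWeaklyRegularSeqIn_succ_iff.mp hseq
    obtain ⟨g, hgΓ, hg⟩ := exists_mem_isSMulRegular_quotient_of_forall_not_subset Γ
      fun p hp hΓp ↦ isSMulRegular_iff_forall_notMem_associatedPrimes.mp hb p hp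
        (hΓ p hp.isPrime hΓp ▸ hb𝔪)
    exact hasWeaklyRegularSeqIn_succ_iff.mpr ⟨g, hgΓ, hg, ih (hseq.sup_span_of_isSMulRegular s hg)⟩

end RegularSequence

theorem PowerSeries.coeff_one_sub_X_pow_pow_mul_mk_one_pow {R : Type*} [CommRing R]
    {r d n : ℕ} (hn : (r - 1) * d < n) :
    coeff n ((1 - X ^ r) ^ d * mk 1 ^ d : PowerSeries R) = 0 := by
  have htrunc : (1 - X ^ r) * mk 1 = (trunc r (mk 1 : PowerSeries R) : PowerSeries R) := by
    ext m
    rw [sub_mul, one_mul, map_sub, coeff_X_pow_mul', Polynomial.coeff_coe, coeff_trunc]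
    by_cases h : r ≤ m <;> simp [h]
  have hdeg : (trunc r (mk 1 : PowerSeries R)).natDegree ≤ r - 1 := by
    rcases r with _ | r
    · simp
    · exact Nat.le_of_lt_succ (natDegree_trunc_lt _ r)
  rw [← mul_pow, htrunc, ← Polynomial.coe_pow, Polynomial.coeff_coe]
  exact Polynomial.coeff_eq_zero_of_natDegree_lt <|
    (Polynomial.natDegree_pow_le_of_le d hdeg).trans_lt (by rwa [mul_comm])

theorem Module.Finite.of_span_eq_top_of_finite {k S : Type*} [CommRing k] [Ring S] [Algebra k S]
    (A : Subalgebra k S) (V : Submodule k S) [Module.Finite k V]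
    (h : Submodule.span A (V : Set S) = ⊤) : Module.Finite A S := by
  obtain ⟨F, hF⟩ := Module.Finite.iff_fg.mp ‹Module.Finite k V›
  exact ⟨⟨F, by rw [← Submodule.span_span_of_tower k, hF, h]⟩⟩

section Polynomial

attribute [local instance] MvPolynomial.gradedAlgebra

variable {σ k : Type*}

local notation "𝒜" => homogeneousSubmodule σ k

section CommRing

variable [CommRing k]

theorem isSMulRegular_quotient_span_X_image {s : Set σ} {a : σ} (ha : a ∉ s) :
    IsSMulRegular (MvPolynomial σ k ⧸ Ideal.span (X '' s : Set (MvPolynomial σ k)))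
      (X a : MvPolynomial σ k) := by
  rw [isSMulRegular_quotient_iff_mul_mem]
  intro u hu
  rw [mem_ideal_span_X_image] at hu ⊢
  intro m hm
  obtain ⟨i, his, hi⟩ := hu (Finsupp.single a 1 + m) (by
    rwa [MvPolynomial.mem_support_iff, coeff_X_mul, ← MvPolynomial.mem_support_iff])
  have hia : a ≠ i := fun h ↦ ha (h ▸ his)
  exact ⟨i, his, by simpa [Finsupp.single_apply, hia] using hi⟩

theorem hasWeaklyRegularSeqIn_span_X_image {S : Set (MvPolynomial σ k)} (hS : ∀ i, X i ∈ S)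
    [DecidableEq σ] (U : Finset σ) :
    ∀ {s : Set σ}, Disjoint (U : Set σ) s →
      HasWeaklyRegularSeqIn (MvPolynomial σ k) S
        (Ideal.span (X '' s : Set (MvPolynomial σ k))) U.card := by
  induction U using Finset.induction_on with
  | empty => exact fun _ ↦ hasWeaklyRegularSeqIn_zero _ _
  | insert a U haU ih =>
    intro s hUs
    rw [Finset.coe_insert, Set.disjoint_insert_left] at hUs
    refine Finset.card_insert_of_notMem haU ▸ hasWeaklyRegularSeqIn_succ_iff.mpr
      ⟨X a, hS a, isSMulRegular_quotient_span_X_image hUs.1, ?_⟩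
    rw [sup_comm, ← Ideal.span_insert, ← Set.image_insert_eq]
    exact ih (Set.disjoint_insert_right.mpr ⟨haU, hUs.2⟩)

theorem homogeneousComponent_mul_of_mem {r : ℕ} {g : MvPolynomial σ k}
    (hg : g ∈ 𝒜 r) (c : MvPolynomial σ k) (n : ℕ) :
    homogeneousComponent n (c * g) =
      if r ≤ n then homogeneousComponent (n - r) c * g else 0 := by
  rw [← decomposition.decompose'_apply, ← decomposition.decompose'_apply]
  exact DirectSum.coe_decompose_mul_of_right_mem _ n hg

theorem span_adjoin_setOf_totalDegree_le_eq_top {Γ : Set (MvPolynomial σ k)} {r N : ℕ}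
    (hr : 1 ≤ r) (hΓ : Γ ⊆ 𝒜 r) (hN : ∀ n, N < n → 𝒜 n ≤ (Ideal.span Γ).restrictScalars k) :
    Submodule.span (Algebra.adjoin k Γ) {p : MvPolynomial σ k | p.totalDegree ≤ N} = ⊤ := by
  set M := Submodule.span (Algebra.adjoin k Γ) {p : MvPolynomial σ k | p.totalDegree ≤ N}
  have hdeg : ∀ n, ∀ p ∈ 𝒜 n, p ∈ M := by
    intro n
    induction n using Nat.strong_induction_on with
    | _ n ih =>
      intro p hp
      by_cases hn : n ≤ N
      · exact Submodule.subset_span ((hp : p.IsHomogeneous n).totalDegree_le.trans hn)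
      obtain ⟨m, f, γ, hsum⟩ := Submodule.mem_span_set'.mp (hN n (by omega) hp)
      have hp' : homogeneousComponent n p = p := by rw [homogeneousComponent_of_mem hp, if_pos rfl]
      rw [← hp', ← hsum, map_sum]
      refine Submodule.sum_mem _ fun i _ ↦ ?_
      rw [smul_eq_mul, homogeneousComponent_mul_of_mem (hΓ (γ i).2)]
      split_ifs with hrn
      · rw [mul_comm]
        exact M.smul_mem ⟨γ i, Algebra.subset_adjoin (γ i).2⟩
          (ih (n - r) (by omega) _ (homogeneousComponent_mem _ _))
      · exact M.zero_mem
  refine eq_top_iff.mpr fun p _ ↦ ?_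
  rw [← sum_homogeneousComponent p]
  exact Submodule.sum_mem _ fun n _ ↦ hdeg n _ (homogeneousComponent_mem n p)

end CommRing

variable [Field k]

theorem eq_vanishingIdeal_zero_of_subset [IsAlgClosed k] [Finite σ] {Γ : Set (MvPolynomial σ k)}
    (hΓ0 : ∀ x : σ → k, (∀ g ∈ Γ, eval x g = 0) → x = 0) {p : Ideal (MvPolynomial σ k)}
    (hp : p.IsPrime) (hΓp : Γ ⊆ p) : p = vanishingIdeal k ({0} : Set (σ → k)) := by
  have hle : vanishingIdeal k {0} ≤ p :=
    calc vanishingIdeal k {0}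
      _ ≤ vanishingIdeal k (zeroLocus k p) := vanishingIdeal_anti_mono fun x hx ↦
          hΓ0 x fun g hg ↦ (mem_zeroLocus_iff.mp hx) g (hΓp hg)
      _ = p := by rw [vanishingIdeal_zeroLocus_eq_radical, hp.radical]
  exact (Ideal.IsMaximal.eq_of_le inferInstance hp.ne_top hle).symm

theorem hasWeaklyRegularSeqIn_of_forall_eval_eq_zero [IsAlgClosed k] [Fintype σ]
    (Γ : Submodule k (MvPolynomial σ k))
    (hΓ0 : ∀ x : σ → k, (∀ g ∈ Γ, eval x g = 0) → x = 0) :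
    HasWeaklyRegularSeqIn (MvPolynomial σ k) Γ ⊥ (Fintype.card σ) := by
  classical
  have hX := hasWeaklyRegularSeqIn_span_X_image
    (S := (vanishingIdeal k ({0} : Set (σ → k)) : Set (MvPolynomial σ k)))
    (fun i ↦ by simp) Finset.univ (s := ∅) (by simp)
  rw [Set.image_empty, Ideal.span_empty, Finset.card_univ] at hX
  exact hX.of_maximalIdeal Γ fun p hp hΓp ↦ eq_vanishingIdeal_zero_of_subset hΓ0 hp hΓp

noncomputable def Ideal.degreePart (I : Ideal (MvPolynomial σ k)) (n : ℕ) :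
    Submodule k (MvPolynomial σ k) :=
  I.restrictScalars k ⊓ 𝒜 n

section graded

variable {I : Ideal (MvPolynomial σ k)} {r : ℕ} {g : MvPolynomial σ k}

theorem Ideal.degreePart_sup_span_singleton_of_lt (hI : I.IsHomogeneous 𝒜) (hg : g ∈ 𝒜 r)
    {n : ℕ} (hn : n < r) : (I ⊔ Ideal.span {g}).degreePart n = I.degreePart n := by
  refine le_antisymm (fun p ⟨hpI, hpn⟩ ↦ ⟨?_, hpn⟩) (inf_le_inf_right _ (by simp))
  obtain ⟨c, hc⟩ := mem_sup_span_singleton_iff.mp hpI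
  have := homogeneousComponent_mem_of_mem hI hc n
  rwa [map_sub, homogeneousComponent_mul_of_mem hg, if_neg (by omega), sub_zero,
    homogeneousComponent_of_mem hpn, if_pos rfl] at this

theorem Ideal.degreePart_sup_span_singleton (hI : I.IsHomogeneous 𝒜) (hg : g ∈ 𝒜 r) (m : ℕ) :
    (I ⊔ Ideal.span {g}).degreePart (m + r) =
      I.degreePart (m + r) ⊔ (𝒜 m).map (LinearMap.mulLeft k g) := by
  apply le_antisymm
  · rintro p ⟨hpI, hpn⟩
    obtain ⟨c, hc⟩ := mem_sup_span_singleton_iff.mp hpI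
    have hcomp := homogeneousComponent_mem_of_mem hI hc (m + r)
    rw [map_sub, homogeneousComponent_mul_of_mem hg, if_pos (by omega), Nat.add_sub_cancel,
      homogeneousComponent_of_mem hpn, if_pos rfl] at hcomp
    have hcg : homogeneousComponent m c * g ∈ 𝒜 (m + r) :=
      SetLike.mul_mem_graded (homogeneousComponent_mem m c) hg
    exact Submodule.mem_sup.mpr ⟨_, ⟨hcomp, Submodule.sub_mem _ hpn hcg⟩, _,
      ⟨_, homogeneousComponent_mem m c, mul_comm _ _⟩, sub_add_cancel _ _⟩
  · refine sup_le (inf_le_inf_right _ (by simp)) ?_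
    rintro _ ⟨c, hc, rfl⟩
    refine ⟨Ideal.mem_sup_right (Ideal.mul_mem_right _ _ (Ideal.mem_span_singleton_self g)), ?_⟩
    exact add_comm m r ▸ SetLike.mul_mem_graded hg hc

theorem Ideal.degreePart_inf_map_mulLeft (hreg : IsSMulRegular (MvPolynomial σ k ⧸ I) g)
    (hg : g ∈ 𝒜 r) (m : ℕ) :
    I.degreePart (m + r) ⊓ (𝒜 m).map (LinearMap.mulLeft k g) =
      (I.degreePart m).map (LinearMap.mulLeft k g) := by
  apply le_antisymm
  · rintro _ ⟨⟨hcgI, -⟩, c, hc, rfl⟩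
    exact ⟨c, ⟨isSMulRegular_quotient_iff_mul_mem.mp hreg c hcgI, hc⟩, rfl⟩
  · rintro _ ⟨c, ⟨hcI, hc⟩, rfl⟩
    refine ⟨⟨I.mul_mem_left g hcI, ?_⟩, c, hc, rfl⟩
    exact add_comm m r ▸ SetLike.mul_mem_graded hg hc

end graded

-- For homogeneous `I` this is the Hilbert series of the graded ring `MvPolynomial σ k ⧸ I`,
-- written through `I ∩ R_n` so as not to leave `MvPolynomial σ k`.
noncomputable def Ideal.quotHilbertSeries (I : Ideal (MvPolynomial σ k)) : PowerSeries ℤ :=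
  PowerSeries.mk fun n ↦ (finrank k (𝒜 n) : ℤ) - finrank k (I.degreePart n)

theorem Ideal.quotHilbertSeries_top : (⊤ : Ideal (MvPolynomial σ k)).quotHilbertSeries = 0 := by
  ext n
  have : (⊤ : Ideal (MvPolynomial σ k)).degreePart n = 𝒜 n := by
    ext p
    simp [Ideal.degreePart]
  rw [Ideal.quotHilbertSeries, PowerSeries.coeff_mk, this, sub_self, map_zero]

variable [Fintype σ]

instance (n : ℕ) : Module.Finite k (𝒜 n) :=
  Module.Finite.iff_fg.mpr (homogeneousSubmodule_fg σ k n)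

theorem finrank_homogeneousSubmodule (n : ℕ) :
    finrank k (𝒜 n) = (Fintype.card σ + n - 1).choose n := by
  classical
  have hdeg : {d : σ →₀ ℕ | d.degree = n} =
      ((Finset.univ : Finset σ).finsuppAntidiag n : Set (σ →₀ ℕ)) := by
    ext d
    simp [Finset.mem_finsuppAntidiag, Finsupp.degree_eq_sum]
  rw [← Finset.card_univ, ← Finset.card_finsuppAntidiag_nat_eq_choose,
    homogeneousSubmodule_eq_finsupp_supported, hdeg,
    (AddMonoidAlgebra.supportedEquivFinsupp _).finrank_eq, Module.finrank_finsupp_self]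
  simp

instance (I : Ideal (MvPolynomial σ k)) (n : ℕ) : Module.Finite k (I.degreePart n) :=
  Submodule.finiteDimensional_inf_right _ _

theorem Ideal.quotHilbertSeries_bot :
    (⊥ : Ideal (MvPolynomial σ k)).quotHilbertSeries = PowerSeries.mk 1 ^ Fintype.card σ := by
  classical
  ext n
  rw [Ideal.quotHilbertSeries, PowerSeries.coeff_mk, PowerSeries.coeff_pow]
  have : (⊥ : Ideal (MvPolynomial σ k)).degreePart n = ⊥ := by
    ext p
    simp +contextual [Ideal.degreePart]
  simp [this, finrank_homogeneousSubmodule, Finset.card_finsuppAntidiag_nat_eq_choose]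

theorem Ideal.quotHilbertSeries_sup_span_singleton {I : Ideal (MvPolynomial σ k)} {r : ℕ}
    {g : MvPolynomial σ k} (hI : I.IsHomogeneous 𝒜) (hg : g ∈ 𝒜 r)
    (hreg : IsSMulRegular (MvPolynomial σ k ⧸ I) g) :
    (I ⊔ Ideal.span {g}).quotHilbertSeries = (1 - PowerSeries.X ^ r) * I.quotHilbertSeries := by
  obtain rfl | hg0 := eq_or_ne g 0
  · have hI : I = ⊤ := I.eq_top_of_isUnit_mem
      (isSMulRegular_quotient_iff_mul_mem.mp hreg 1 (by simp)) isUnit_one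
    simp [hI, Ideal.quotHilbertSeries_top]
  have hinj : Function.Injective (LinearMap.mulLeft k g) := mul_right_injective₀ hg0
  have finrank_map (V : Submodule k (MvPolynomial σ k)) :
      finrank k (V.map (LinearMap.mulLeft k g)) = finrank k V :=
    (Submodule.equivMapOfInjective _ hinj V).finrank_eq.symm
  ext n
  rw [sub_mul, one_mul, map_sub, PowerSeries.coeff_X_pow_mul']
  simp only [Ideal.quotHilbertSeries, PowerSeries.coeff_mk]
  split_ifs with hrn
  · obtain ⟨m, rfl⟩ := Nat.exists_eq_add_of_le' hrn
    have h := Submodule.finrank_sup_add_finrank_inf_eq (I.degreePart (m + r))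
      ((𝒜 m).map (LinearMap.mulLeft k g))
    rw [← I.degreePart_sup_span_singleton hI hg, I.degreePart_inf_map_mulLeft hreg hg,
      finrank_map, finrank_map] at h
    rw [Nat.add_sub_cancel]
    omega
  · rw [I.degreePart_sup_span_singleton_of_lt hI hg (by omega), sub_zero]

theorem Ideal.quotHilbertSeries_sup_span_of_isWeaklyRegular {r : ℕ} :
    ∀ {I : Ideal (MvPolynomial σ k)} (l : List (MvPolynomial σ k)), I.IsHomogeneous 𝒜 →
      (∀ x ∈ l, x ∈ 𝒜 r) → IsWeaklyRegular (MvPolynomial σ k ⧸ I) l →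
      (I ⊔ Ideal.span {x | x ∈ l}).quotHilbertSeries =
        (1 - PowerSeries.X ^ r) ^ l.length * I.quotHilbertSeries
  | I, [], _, _, _ => by simp
  | I, a :: l, hI, hl, hreg => by
    rw [isWeaklyRegular_quotient_cons_iff] at hreg
    have ha : a ∈ 𝒜 r := hl a (List.mem_cons_self ..)
    have hIa : (I ⊔ Ideal.span {a}).IsHomogeneous 𝒜 :=
      hI.sup (Ideal.homogeneous_span _ _ (by simpa using ⟨r, ha⟩))
    have hspan : I ⊔ Ideal.span {x | x ∈ a :: l} = I ⊔ Ideal.span {a} ⊔ Ideal.span {x | x ∈ l} := by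
      rw [sup_assoc, ← Ideal.span_union]
      congr 2
      ext; simp
    rw [hspan, Ideal.quotHilbertSeries_sup_span_of_isWeaklyRegular l hIa
      (fun x hx ↦ hl x (List.mem_cons_of_mem a hx)) hreg.2,
      Ideal.quotHilbertSeries_sup_span_singleton hI ha hreg.1, List.length_cons, pow_succ,
      mul_assoc]

theorem Ideal.homogeneousSubmodule_le_of_coeff_quotHilbertSeries_eq_zero
    {I : Ideal (MvPolynomial σ k)} {n : ℕ} (h : PowerSeries.coeff n I.quotHilbertSeries = 0) :
    𝒜 n ≤ I.restrictScalars k := by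
  have hfin : finrank k (I.degreePart n) = finrank k (𝒜 n) := by
    rw [Ideal.quotHilbertSeries, PowerSeries.coeff_mk] at h
    omega
  rw [← Submodule.eq_of_le_of_finrank_eq inf_le_right hfin]
  exact inf_le_left

theorem homogeneousSubmodule_le_span_of_isWeaklyRegular {r : ℕ} {l : List (MvPolynomial σ k)}
    (hl : ∀ x ∈ l, x ∈ 𝒜 r)
    (hreg : IsWeaklyRegular (MvPolynomial σ k ⧸ (⊥ : Ideal (MvPolynomial σ k))) l)
    (hlen : l.length = Fintype.card σ) {n : ℕ} (hn : (r - 1) * Fintype.card σ < n) :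
    𝒜 n ≤ (Ideal.span {x | x ∈ l}).restrictScalars k := by
  have hH := Ideal.quotHilbertSeries_sup_span_of_isWeaklyRegular l (Ideal.IsHomogeneous.bot _)
    hl hreg
  rw [bot_sup_eq, Ideal.quotHilbertSeries_bot, hlen] at hH
  refine Ideal.homogeneousSubmodule_le_of_coeff_quotHilbertSeries_eq_zero ?_
  rw [hH]
  exact PowerSeries.coeff_one_sub_X_pow_pow_mul_mk_one_pow hn

end Polynomial

theorem statement9_general (d r : ℕ) (hr : 1 ≤ r)
    (Γ : Submodule ℂ (MvPolynomial (Fin d) ℂ))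
    (hΓ : Γ ≤ homogeneousSubmodule (Fin d) ℂ r)
    (hΓ0 : ∀ x : Fin d → ℂ, (∀ g ∈ Γ, eval x g = 0) → x = 0) :
    Submodule.span (Algebra.adjoin ℂ (Γ : Set (MvPolynomial (Fin d) ℂ)))
        {p : MvPolynomial (Fin d) ℂ | p.totalDegree ≤ (r - 1) * d} = ⊤ ∧
    Module.Finite (Algebra.adjoin ℂ (Γ : Set (MvPolynomial (Fin d) ℂ)))
      (MvPolynomial (Fin d) ℂ) := by
  obtain ⟨l, hlen, hlΓ, hreg⟩ := hasWeaklyRegularSeqIn_of_forall_eval_eq_zero Γ hΓ0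
  have hspan := span_adjoin_setOf_totalDegree_le_eq_top hr hΓ fun n hn ↦
    (homogeneousSubmodule_le_span_of_isWeaklyRegular (fun x hx ↦ hΓ (hlΓ x hx)) hreg hlen
      (by rwa [Fintype.card_fin])).trans
    fun p hp ↦ Ideal.span_mono (fun x hx ↦ hlΓ x hx) hp
  refine ⟨hspan, Module.Finite.of_span_eq_top_of_finite _
    (restrictTotalDegree (Fin d) ℂ ((r - 1) * d)) ?_⟩
  rwa [show (restrictTotalDegree (Fin d) ℂ ((r - 1) * d) : Set (MvPolynomial (Fin d) ℂ)) =
    {p | p.totalDegree ≤ (r - 1) * d} from Set.ext fun p ↦ mem_restrictTotalDegree _ _ p]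

/-- if the subspace `Γ ⊆ R_r` has `0` as its only common zero, then
`R = ℂ[x_1,…,x_d]` is generated as a module over `Algebra.adjoin ℂ Γ` by the
polynomials of degree at most `(r−1)·d`; in particular `R` is a finitely generated
`Algebra.adjoin ℂ Γ`-module. -/
theorem statement9 (d r : ℕ) (hd : 1 ≤ d) (hr : 1 ≤ r)
    (Γ : Submodule ℂ (MvPolynomial (Fin d) ℂ))
    (hΓ : Γ ≤ homogeneousSubmodule (Fin d) ℂ r)
    (hΓ0 : ∀ x : Fin d → ℂ, (∀ g ∈ Γ, eval x g = 0) → x = 0) :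
    Submodule.span (Algebra.adjoin ℂ (Γ : Set (MvPolynomial (Fin d) ℂ)))
        {p : MvPolynomial (Fin d) ℂ | p.totalDegree ≤ (r - 1) * d} = ⊤ ∧
    Module.Finite (Algebra.adjoin ℂ (Γ : Set (MvPolynomial (Fin d) ℂ)))
      (MvPolynomial (Fin d) ℂ) :=
  statement9_general d r hr Γ hΓ hΓ0
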